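/- (Implicit background estimation removes non-distinctiveness) Fix n ≥ 1. For v ∈ ℝ^n define ImpBG(v) ∈ ℝ^{n+1} to be the vector with background component −logsumexp(v) and remaining components equal to those of v. If σ(ImpBG(v)) = σ(ImpBG(w)) for v, w ∈ ℝ^n, then v = w; i.e., the composition of softmax with the implicit background construction is injective on ℝ^n. -/

import Mathlib

/-- Softmax: `σ(u)_i = exp(u_i) / Σ_j exp(u_j)`. -/
noncomputable def softmax {k : ℕ} (u : Fin k → ℝ) : Fin k → ℝ :=
  fun i => Real.exp (u i) / ∑ j, Real.exp (u j)

/-- `logsumexp(v) = log(Σ_j exp(v_j))`. -/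
noncomputable def logsumexp {n : ℕ} (v : Fin n → ℝ) : ℝ :=
  Real.log (∑ j, Real.exp (v j))

/-- The implicit-background composite vector in `ℝ^{n+1}`: background component
`−logsumexp(v)` followed by the components of `v`. -/
noncomputable def ImpBG {n : ℕ} (v : Fin n → ℝ) : Fin (n + 1) → ℝ :=
  Fin.cons (-logsumexp v) v

/-! The background component `-logsumexp v` of `ImpBG v` is what breaks the shift invariance of
softmax. Equal softmax values force `ImpBG w = ImpBG v + c` for a constant `c`; on the tail this
says `w = v + c`, hence `logsumexp w = logsumexp v + c`, while on the background component it
says `-logsumexp w = -logsumexp v + c`. Together these give `c = -c`, so `c = 0`. -/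

theorem log_softmax {k : ℕ} (u : Fin k → ℝ) (i : Fin k) :
    Real.log (softmax u i) = u i - logsumexp u := by
  have hsum : 0 < ∑ j, Real.exp (u j) :=
    Finset.sum_pos (fun j _ => Real.exp_pos (u j)) ⟨i, Finset.mem_univ i⟩
  rw [softmax, logsumexp, Real.log_div (Real.exp_pos _).ne' hsum.ne', Real.log_exp]

theorem exists_add_const_of_softmax_eq {k : ℕ} {u u' : Fin k → ℝ}
    (h : softmax u = softmax u') : ∃ c : ℝ, ∀ i, u' i = u i + c := by
  refine ⟨logsumexp u' - logsumexp u, fun i => ?_⟩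
  have hi := congrArg Real.log (congrFun h i)
  rw [log_softmax, log_softmax] at hi
  linarith

theorem logsumexp_add_const {n : ℕ} [NeZero n] (v : Fin n → ℝ) (c : ℝ) :
    logsumexp (fun i => v i + c) = logsumexp v + c := by
  have hsum : 0 < ∑ j, Real.exp (v j) :=
    Finset.sum_pos (fun j _ => Real.exp_pos (v j)) Finset.univ_nonempty
  simp only [logsumexp, Real.exp_add, ← Finset.sum_mul]
  rw [Real.log_mul hsum.ne' (Real.exp_pos c).ne', Real.log_exp]

/-- (Implicit background estimation removes non-distinctiveness) The composition of
softmax with the implicit background construction is injective on `ℝ^n`: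
if `σ(ImpBG(v)) = σ(ImpBG(w))` then `v = w`. -/
theorem softmax_impBG_injective {n : ℕ} (hn : 1 ≤ n) (v w : Fin n → ℝ)
    (h : softmax (ImpBG v) = softmax (ImpBG w)) : v = w := by
  have : NeZero n := ⟨by omega⟩
  obtain ⟨c, hc⟩ := exists_add_const_of_softmax_eq h
  have hw : w = fun i => v i + c := funext fun i => by simpa [ImpBG] using hc i.succ
  have hbg : -logsumexp w = -logsumexp v + c := by simpa [ImpBG] using hc 0
  have hc0 : c = 0 := by
    rw [hw, logsumexp_add_const] at hbg
    linarith
  simp [hw, hc0]
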